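/- Let S ⊆ V be a nonempty finite set such that the destination v is covered by S and min S ≠ v. Then step(S) is nonempty, v is covered by step(S), and min(step(S)) > min(S). (One forwarding step of a probe strictly increases the minimum identifier of the frontier while preserving reachability of the destination.) -/
import Mathlib


/-- One forwarding step of a probe with destination `v`: the minimum of the frontier `S`
is removed and replaced by all its `E`-successors with larger identifier at most `v`. -/
def probeStep {V : Type*} [Fintype V] [LinearOrder V]
    (E : V → V → Prop) [DecidableRel E] (v : V) (S : Finset V) : Finset V :=
  if h : S.Nonempty then
    (S.erase (S.min' h)) ∪
      (Finset.univ.filter (fun y => E (S.min' h) y ∧ S.min' h < y ∧ y ≤ v))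
  else ∅

/-- The destination `v` is covered by the frontier `S`: `v ∈ S` or there is an increasing
path (along `E`, with strictly increasing identifiers) from some element of `S` to `v`. -/
def Covered {V : Type*} [LinearOrder V] (E : V → V → Prop) (v : V) (S : Finset V) : Prop :=
  v ∈ S ∨ ∃ s ∈ S, Relation.TransGen (fun a b => E a b ∧ a < b) s v

private lemma lt_of_incTransGen {V : Type*} [LinearOrder V] {E : V → V → Prop} {a b : V}
    (h : Relation.TransGen (fun a b => E a b ∧ a < b) a b) : a < b := by
  induction h with
  | single h => exact h.2
  | tail _ h ih => exact ih.trans h.2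

/-- If the destination `v` is covered by the nonempty frontier `S` and
`min S ≠ v`, then `step(S)` is nonempty, `v` is covered by `step(S)`, and
`min(step(S)) > min(S)`. -/
theorem probeStep_covered_min_increases
    {V : Type*} [Fintype V] [LinearOrder V]
    (E : V → V → Prop) [DecidableRel E] (v : V)
    (S : Finset V) (hS : S.Nonempty) (hcov : Covered E v S) (hne : S.min' hS ≠ v) :
    ∃ h' : (probeStep E v S).Nonempty,
      Covered E v (probeStep E v S) ∧ S.min' hS < (probeStep E v S).min' h' := by
  set m := S.min' hS with hm
  have hstep : probeStep E v S =
      (S.erase m) ∪ (Finset.univ.filter (fun y => E m y ∧ m < y ∧ y ≤ v)) := by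
    simp [probeStep, hS, hm]
  -- first: v is covered by step(S)
  have hcov' : Covered E v (probeStep E v S) := by
    rcases hcov with hv | ⟨s, hsS, hpath⟩
    · left
      rw [hstep]
      exact Finset.mem_union_left _ (Finset.mem_erase.2 ⟨fun h => hne h.symm, hv⟩)
    · by_cases hs : s = m
      · subst hs
        -- path starts at min; take first step
        obtain ⟨y, ⟨hEy, hlt⟩, hrest⟩ := Relation.TransGen.head'_iff.1 hpath
        rcases (Relation.reflTransGen_iff_eq_or_transGen.1 hrest) with rfl | htg
        · left
          rw [hstep]
          exact Finset.mem_union_right _ (Finset.mem_filter.2 ⟨Finset.mem_univ _,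
            hEy, hlt, le_refl v⟩)
        · have hyv : y < v := lt_of_incTransGen htg
          have hy : y ∈ probeStep E v S := by
            rw [hstep]
            exact Finset.mem_union_right _ (Finset.mem_filter.2 ⟨Finset.mem_univ _,
              hEy, hlt, hyv.le⟩)
          exact Or.inr ⟨y, hy, htg⟩
      · right
        refine ⟨s, ?_, hpath⟩
        rw [hstep]
        exact Finset.mem_union_left _ (Finset.mem_erase.2 ⟨hs, hsS⟩)
  -- nonempty
  have hne' : (probeStep E v S).Nonempty := by
    rcases hcov' with hv | ⟨s, hs, _⟩
    · exact ⟨v, hv⟩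
    · exact ⟨s, hs⟩
  refine ⟨hne', hcov', ?_⟩
  -- min increases: every element of step(S) is > m
  have hgt : ∀ x ∈ probeStep E v S, m < x := by
    intro x hx
    rw [hstep] at hx
    rcases Finset.mem_union.1 hx with hx | hx
    · rcases Finset.mem_erase.1 hx with ⟨hxne, hxS⟩
      exact lt_of_le_of_ne (S.min'_le x hxS) (Ne.symm hxne)
    · exact (Finset.mem_filter.1 hx).2.2.1
  exact hgt _ ((probeStep E v S).min'_mem hne')
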